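/- arXiv:2203.09081 — 4 statements merged into one kernel-verified Lean document; each statement's English description precedes it below -/
import Mathlib

section
/- Let W* = [w_1*,...,w_K*] be a fixed simplex ETF scaled so that w_k*^T w_{k'}* = E_W(K/(K-1) δ_{kk'} - 1/(K-1)). Then for any single feature h with label k, the minimizer of L_CE(h, W*) over the ball ||h||² ≤ E_H is unique and equals h* = √(E_H/E_W) w_k*, so that h*^T w_{k'}* = √(E_H E_W)(K/(K-1) δ_{kk'} - 1/(K-1)) for all k'. -/
/-!
With logits `a j = ⟪h, w j⟫`, the loss is `log ∑ exp (a j) - a k`, and the logits sum to zero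
because the ETF vectors do. For a fixed target logit `t = a k`, convexity of `exp` shows that the
sum of the other `K - 1` exponentials is smallest when those logits all equal `-t / (K - 1)`;
the resulting lower bound `log (exp t + (K - 1) exp (-t / (K - 1))) - t` is strictly decreasing
in `t`. On the ball `‖h‖² ≤ E_H` the target logit is at most `√(E_H E_W)` by Cauchy–Schwarz,
with equality only at `h = √(E_H / E_W) • w k`, and this point makes the other logits balanced.
-/

open scoped BigOperators RealInnerProductSpace

noncomputable section

open Real Finset

lemma card_mul_exp_le_sum_exp {ι : Type*} (s : Finset ι) (a : ι → ℝ) {m : ℝ}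
    (hm : ∑ j ∈ s, a j = #s * m) : #s * exp m ≤ ∑ j ∈ s, exp (a j) := by
  -- sum the tangent line of `exp` at `m`
  calc (#s : ℝ) * exp m = ∑ j ∈ s, exp m * (1 + (a j - m)) := by
        rw [← mul_sum, sum_add_distrib, sum_sub_distrib, hm]
        simp [mul_comm]
    _ ≤ ∑ j ∈ s, exp (a j) := sum_le_sum fun j _ =>
      calc exp m * (1 + (a j - m)) ≤ exp m * exp (a j - m) := by
            gcongr
            linarith [add_one_le_exp (a j - m)]
        _ = exp (a j) := by rw [← exp_add, add_sub_cancel]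

def crossEntropy {ι : Type*} [Fintype ι] (a : ι → ℝ) (k : ι) : ℝ :=
  -log (exp (a k) / ∑ j, exp (a j))

lemma crossEntropy_eq_log_sum_exp_sub {ι : Type*} [Fintype ι] (a : ι → ℝ) (k : ι) :
    crossEntropy a k = log (∑ j, exp (a j)) - a k := by
  have hpos : 0 < ∑ j, exp (a j) := sum_pos (fun j _ => exp_pos _) ⟨k, mem_univ k⟩
  rw [crossEntropy, log_div (exp_ne_zero _) hpos.ne', log_exp]
  ring

/-- Cross-entropy over `K` classes when the target logit is `t` and the other `K - 1` logits
all equal `-t / (K - 1)`. -/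
def balancedCELoss (K : ℕ) (t : ℝ) : ℝ :=
  log (exp t + (K - 1) * exp (-t / (K - 1))) - t

lemma balancedCELoss_strictAnti {K : ℕ} (hK : 1 < K) : StrictAnti (balancedCELoss K) := by
  have hc : (0 : ℝ) < K - 1 := by
    have : (1 : ℝ) < K := by exact_mod_cast hK
    linarith
  have hform : ∀ t, balancedCELoss K t = log (1 + (K - 1) * exp (-t / (K - 1) - t)) := by
    intro t
    rw [balancedCELoss, ← log_exp t, ← log_div (by positivity) (exp_ne_zero t), log_exp, exp_sub]
    field_simp
  intro t₁ t₂ ht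
  rw [hform, hform]
  apply log_lt_log (by positivity)
  gcongr

section LogSumExp

variable {ι : Type*} [Fintype ι] [DecidableEq ι] (a : ι → ℝ) (k : ι)

lemma balancedCELoss_le_crossEntropy (hK : 1 < Fintype.card ι) (ha : ∑ j, a j = 0) :
    balancedCELoss (Fintype.card ι) (a k) ≤ crossEntropy a k := by
  have hc : (0 : ℝ) < Fintype.card ι - 1 := by
    have : (1 : ℝ) < Fintype.card ι := by exact_mod_cast hK
    linarith
  have hcard : (#(univ.erase k) : ℝ) = Fintype.card ι - 1 := by
    rw [cast_card_erase_of_mem (mem_univ k), card_univ]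
  have hrest : ∑ j ∈ univ.erase k, a j = #(univ.erase k) * (-a k / (Fintype.card ι - 1)) := by
    rw [hcard, mul_div_cancel₀ _ hc.ne']
    linarith [add_sum_erase univ a (mem_univ k)]
  have hjensen := card_mul_exp_le_sum_exp _ a hrest
  rw [hcard] at hjensen
  rw [crossEntropy_eq_log_sum_exp_sub, ← add_sum_erase univ _ (mem_univ k), balancedCELoss]
  gcongr

lemma crossEntropy_eq_balancedCELoss (hbal : ∀ j ≠ k, a j = -a k / (Fintype.card ι - 1)) :
    crossEntropy a k = balancedCELoss (Fintype.card ι) (a k) := by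
  rw [crossEntropy_eq_log_sum_exp_sub, ← add_sum_erase univ _ (mem_univ k),
    sum_congr rfl fun j hj => by rw [hbal j (ne_of_mem_erase hj)], sum_const, nsmul_eq_mul,
    cast_card_erase_of_mem (mem_univ k), card_univ, balancedCELoss]

end LogSumExp

section InnerProductSpace

variable {E : Type*} [NormedAddCommGroup E] [InnerProductSpace ℝ E] {h v : E} {r : ℝ}

lemma real_inner_le_mul_norm_of_norm_le (hh : ‖h‖ ≤ r) : ⟪h, v⟫ ≤ r * ‖v‖ :=
  (real_inner_le_norm h v).trans (mul_le_mul_of_nonneg_right hh (norm_nonneg v))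

lemma eq_smul_of_norm_le_of_real_inner_eq (hv : v ≠ 0) (hh : ‖h‖ ≤ r)
    (heq : ⟪h, v⟫ = r * ‖v‖) : h = (r / ‖v‖) • v := by
  have hv' : 0 < ‖v‖ := norm_pos_iff.2 hv
  have hnorm : ‖h‖ = r :=
    le_antisymm hh (le_of_mul_le_mul_right (heq ▸ real_inner_le_norm h v) hv')
  have hparallel : ‖v‖ • h = r • v := hnorm ▸ inner_eq_norm_mul_iff_real.1 (by rw [heq, hnorm])
  rw [div_eq_inv_mul, mul_smul, ← hparallel, smul_smul, inv_mul_cancel₀ hv'.ne', one_smul]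

lemma real_inner_self_of_simplexETF {K : ℕ} (hK : 2 ≤ K) {EW : ℝ} {w : Fin K → E}
    (hW : ∀ i j, ⟪w i, w j⟫ =
      EW * ((K : ℝ) / (K - 1) * (if i = j then 1 else 0) - 1 / (K - 1))) (i : Fin K) :
    ⟪w i, w i⟫ = EW := by
  have hc : (0 : ℝ) < K - 1 := by
    have : (2 : ℝ) ≤ K := by exact_mod_cast hK
    linarith
  rw [hW, if_pos rfl]
  field_simp

lemma norm_of_simplexETF {K : ℕ} (hK : 2 ≤ K) {EW : ℝ} {w : Fin K → E}
    (hW : ∀ i j, ⟪w i, w j⟫ =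
      EW * ((K : ℝ) / (K - 1) * (if i = j then 1 else 0) - 1 / (K - 1))) (i : Fin K) :
    ‖w i‖ = √EW := by
  rw [norm_eq_sqrt_real_inner, real_inner_self_of_simplexETF hK hW]

end InnerProductSpace

theorem ce_etf_minimizer_general (d K : ℕ) (hK : 2 ≤ K)
    (EW EH : ℝ) (hEW : 0 < EW)
    (w : Fin K → EuclideanSpace ℝ (Fin d))
    (hW : ∀ i j, ⟪w i, w j⟫ =
      EW * ((K : ℝ) / (K - 1) * (if i = j then 1 else 0) - 1 / (K - 1)))
    (hWsum : ∑ i : Fin K, w i = 0)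
    (k : Fin K)
    (L : EuclideanSpace ℝ (Fin d) → ℝ)
    (hL : ∀ h, L h =
      -Real.log (Real.exp ⟪h, w k⟫ / ∑ j : Fin K, Real.exp ⟪h, w j⟫))
    (hstar : EuclideanSpace ℝ (Fin d))
    (hhstar : hstar = Real.sqrt (EH / EW) • w k) :
    (∀ h : EuclideanSpace ℝ (Fin d), ‖h‖ ^ 2 ≤ EH → L hstar ≤ L h) ∧
    (∀ h : EuclideanSpace ℝ (Fin d), ‖h‖ ^ 2 ≤ EH → L h = L hstar → h = hstar) ∧
    (∀ k' : Fin K, ⟪hstar, w k'⟫ = Real.sqrt (EH * EW) *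
      ((K : ℝ) / (K - 1) * (if k = k' then 1 else 0) - 1 / (K - 1))) := by
  have hwkk : ⟪w k, w k⟫ = EW := real_inner_self_of_simplexETF hK hW k
  have hwk : ‖w k‖ = √EW := norm_of_simplexETF hK hW k
  have hwk_ne : w k ≠ 0 := norm_ne_zero_iff.1 (hwk ▸ (sqrt_pos.2 hEW).ne')
  have hmax : √EH * ‖w k‖ = √(EH * EW) := by rw [hwk, sqrt_mul' _ hEW.le]
  have hstar_eq : hstar = (√EH / ‖w k‖) • w k := by rw [hhstar, hwk, sqrt_div' _ hEW.le]
  have hstar_inner : ⟪hstar, w k⟫ = √(EH * EW) := by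
    have := norm_ne_zero_iff.2 hwk_ne
    rw [hstar_eq, real_inner_smul_left, real_inner_self_eq_norm_sq, ← hmax]
    field_simp
  have hlower : ∀ h, balancedCELoss K ⟪h, w k⟫ ≤ L h := fun h => by
    have := balancedCELoss_le_crossEntropy (fun j => ⟪h, w j⟫) k (by rwa [Fintype.card_fin])
      (by rw [← inner_sum, hWsum, inner_zero_right])
    rwa [Fintype.card_fin, crossEntropy, ← hL] at this
  have hLstar : L hstar = balancedCELoss K (√(EH * EW)) := by
    have := crossEntropy_eq_balancedCELoss (fun j => ⟪hstar, w j⟫) k fun j hj => by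
      rw [hhstar, real_inner_smul_left, real_inner_smul_left, hW k j, if_neg hj.symm, hwkk,
        Fintype.card_fin]
      ring
    rwa [Fintype.card_fin, crossEntropy, ← hL, hstar_inner] at this
  have hupper : ∀ h : EuclideanSpace ℝ (Fin d), ‖h‖ ^ 2 ≤ EH → ⟪h, w k⟫ ≤ √(EH * EW) :=
    fun h hh => hmax ▸ real_inner_le_mul_norm_of_norm_le (le_sqrt_of_sq_le hh)
  refine ⟨fun h hh => ?_, fun h hh heq => ?_, fun k' => ?_⟩
  · rw [hLstar]
    exact ((balancedCELoss_strictAnti hK).antitone (hupper h hh)).trans (hlower h)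
  · have hopt : √(EH * EW) ≤ ⟪h, w k⟫ :=
      (balancedCELoss_strictAnti hK).le_iff_ge.1 (hLstar ▸ heq ▸ hlower h)
    rw [hstar_eq]
    refine eq_smul_of_norm_le_of_real_inner_eq hwk_ne (le_sqrt_of_sq_le hh) ?_
    rw [hmax]
    exact le_antisymm (hupper h hh) hopt
  · rw [← hstar_inner, hhstar, real_inner_smul_left, real_inner_smul_left, hW, hwkk]
    ring

theorem ce_etf_minimizer (d K : ℕ) (hK : 2 ≤ K) (hd : K ≤ d)
    (EW EH : ℝ) (hEW : 0 < EW) (hEH : 0 < EH)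
    (w : Fin K → EuclideanSpace ℝ (Fin d))
    (hW : ∀ i j, ⟪w i, w j⟫ =
      EW * ((K : ℝ) / (K - 1) * (if i = j then 1 else 0) - 1 / (K - 1)))
    (hWsum : ∑ i : Fin K, w i = 0)
    (k : Fin K)
    (L : EuclideanSpace ℝ (Fin d) → ℝ)
    (hL : ∀ h, L h =
      -Real.log (Real.exp ⟪h, w k⟫ / ∑ j : Fin K, Real.exp ⟪h, w j⟫))
    (hstar : EuclideanSpace ℝ (Fin d))
    (hhstar : hstar = Real.sqrt (EH / EW) • w k) :
    (∀ h : EuclideanSpace ℝ (Fin d), ‖h‖ ^ 2 ≤ EH → L hstar ≤ L h) ∧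
    (∀ h : EuclideanSpace ℝ (Fin d), ‖h‖ ^ 2 ≤ EH → L h = L hstar → h = hstar) ∧
    (∀ k' : Fin K, ⟪hstar, w k'⟫ = Real.sqrt (EH * EW) *
      ((K : ℝ) / (K - 1) * (if k = k' then 1 else 0) - 1 / (K - 1))) :=
  ce_etf_minimizer_general d K hK EW EH hEW w hW hWsum k L hL hstar hhstar
end
end

section
/- In the constrained minimization of L_CE(h, W*) over ||h||² ≤ E_H with W* a fixed scaled simplex ETF, any minimizer h* must lie on the boundary, i.e., ||h*||² = E_H (the norm constraint is active). -/
/-!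
If the constraint were slack at `h⋆`, one could move `h⋆` a little in the direction `w k`
and stay feasible. Since the simplex ETF satisfies `⟪w k, w j⟫ < ⟪w k, w k⟫` for `j ≠ k`,
this move strictly increases every margin `z k - z j` of the logits `z j = ⟪h, w j⟫`,
and the cross-entropy `log ∑ j, exp (z j - z k)` strictly decreases, contradicting minimality.
-/

open scoped BigOperators RealInnerProductSpace

noncomputable section

open Filter Topology

def softmaxCE {ι : Type*} [Fintype ι] (z : ι → ℝ) (k : ι) : ℝ :=
  -Real.log (Real.exp (z k) / ∑ j, Real.exp (z j))

section softmaxCE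

variable {ι : Type*} [Fintype ι]

theorem softmaxCE_eq_log_sum_exp_sub (z : ι → ℝ) (k : ι) :
    softmaxCE z k = Real.log (∑ j, Real.exp (z j - z k)) := by
  have hsum : 0 < ∑ j, Real.exp (z j) :=
    Finset.sum_pos (fun j _ => Real.exp_pos _) ⟨k, Finset.mem_univ k⟩
  simp only [softmaxCE, Real.exp_sub, ← Finset.sum_div]
  rw [Real.log_div (Real.exp_ne_zero _) hsum.ne', Real.log_div hsum.ne' (Real.exp_ne_zero _),
    Real.log_exp]
  ring

theorem softmaxCE_lt_of_margin_lt {z z' : ι → ℝ} {k : ι}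
    (hle : ∀ j, z' j - z' k ≤ z j - z k) (hlt : ∃ j, z' j - z' k < z j - z k) :
    softmaxCE z' k < softmaxCE z k := by
  obtain ⟨j, hj⟩ := hlt
  rw [softmaxCE_eq_log_sum_exp_sub, softmaxCE_eq_log_sum_exp_sub]
  exact Real.log_lt_log (Finset.sum_pos (fun i _ => Real.exp_pos _) ⟨k, Finset.mem_univ k⟩)
    (Finset.sum_lt_sum (fun i _ => Real.exp_le_exp.2 (hle i))
      ⟨j, Finset.mem_univ j, Real.exp_lt_exp.2 hj⟩)

theorem softmaxCE_inner_add_smul_lt {E : Type*} [NormedAddCommGroup E] [InnerProductSpace ℝ E]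
    {w : ι → E} {k : ι} {v : E} (hle : ∀ j, ⟪v, w j⟫ ≤ ⟪v, w k⟫) (hlt : ∃ j, ⟪v, w j⟫ < ⟪v, w k⟫)
    (h : E) {t : ℝ} (ht : 0 < t) :
    softmaxCE (fun j => ⟪h + t • v, w j⟫) k < softmaxCE (fun j => ⟪h, w j⟫) k := by
  obtain ⟨j₀, hj₀⟩ := hlt
  apply softmaxCE_lt_of_margin_lt
  · intro j
    simp only [inner_add_left, real_inner_smul_left]
    nlinarith [hle j]
  · refine ⟨j₀, ?_⟩
    simp only [inner_add_left, real_inner_smul_left]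
    nlinarith

end softmaxCE

theorem exists_pos_add_smul_mem {E : Type*} [AddCommGroup E] [TopologicalSpace E] [Module ℝ E]
    [ContinuousAdd E] [ContinuousSMul ℝ E] {U : Set E} (hU : IsOpen U) {x : E} (hx : x ∈ U)
    (v : E) : ∃ t : ℝ, 0 < t ∧ x + t • v ∈ U := by
  have hcont : Continuous fun t : ℝ => x + t • v := by fun_prop
  have hU' : ∀ᶠ t : ℝ in 𝓝[>] 0, x + t • v ∈ U :=
    nhdsWithin_le_nhds (hcont.continuousAt.preimage_mem_nhds (by simpa using hU.mem_nhds hx))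
  exact (hU'.and self_mem_nhdsWithin).exists.imp fun t ht => ⟨ht.2, ht.1⟩

theorem inner_lt_inner_self_of_simplexETF {E : Type*} [NormedAddCommGroup E]
    [InnerProductSpace ℝ E] {K : ℕ} (hK : 2 ≤ K) {EW : ℝ} (hEW : 0 < EW) {w : Fin K → E}
    (hW : ∀ i j, ⟪w i, w j⟫ =
      EW * ((K : ℝ) / (K - 1) * (if i = j then 1 else 0) - 1 / (K - 1)))
    {i j : Fin K} (hij : i ≠ j) : ⟪w i, w j⟫ < ⟪w i, w i⟫ := by
  have hK1 : (0 : ℝ) < K - 1 := by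
    have : (2 : ℝ) ≤ K := by exact_mod_cast hK
    linarith
  rw [hW, hW, if_neg hij, if_pos rfl]
  have : 0 < EW * K / (K - 1) := by positivity
  field_simp
  nlinarith

theorem ce_constraint_active_general (d K : ℕ) (hK : 2 ≤ K)
    (EW EH : ℝ) (hEW : 0 < EW)
    (w : Fin K → EuclideanSpace ℝ (Fin d))
    (hW : ∀ i j, ⟪w i, w j⟫ =
      EW * ((K : ℝ) / (K - 1) * (if i = j then 1 else 0) - 1 / (K - 1)))
    (k : Fin K)
    (L : EuclideanSpace ℝ (Fin d) → ℝ)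
    (hL : ∀ h, L h =
      -Real.log (Real.exp ⟪h, w k⟫ / ∑ j : Fin K, Real.exp ⟪h, w j⟫))
    (hstar : EuclideanSpace ℝ (Fin d)) (hball : ‖hstar‖ ^ 2 ≤ EH)
    (hmin : ∀ h : EuclideanSpace ℝ (Fin d), ‖h‖ ^ 2 ≤ EH → L hstar ≤ L h) :
    ‖hstar‖ ^ 2 = EH := by
  by_contra hne
  have hopen : IsOpen {h : EuclideanSpace ℝ (Fin d) | ‖h‖ ^ 2 < EH} :=
    isOpen_lt (by fun_prop) continuous_const
  obtain ⟨t, ht, hfeas⟩ := exists_pos_add_smul_mem hopen (lt_of_le_of_ne hball hne) (w k)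
  have : Nontrivial (Fin K) := Fin.nontrivial_iff_two_le.2 hK
  obtain ⟨j, hj⟩ := exists_ne k
  have hgap : ∀ i, i ≠ k → ⟪w k, w i⟫ < ⟪w k, w k⟫ := fun i hi =>
    inner_lt_inner_self_of_simplexETF hK hEW hW (Ne.symm hi)
  have hdescent := softmaxCE_inner_add_smul_lt
    (fun i => (eq_or_ne i k).elim (fun hi => hi ▸ le_rfl) fun hi => (hgap i hi).le)
    ⟨j, hgap j hj⟩ hstar ht
  refine (hmin _ hfeas.le).not_gt ?_
  simpa only [hL, softmaxCE] using hdescent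

theorem ce_constraint_active (d K : ℕ) (hK : 2 ≤ K)
    (EW EH : ℝ) (hEW : 0 < EW) (hEH : 0 < EH)
    (w : Fin K → EuclideanSpace ℝ (Fin d))
    (hW : ∀ i j, ⟪w i, w j⟫ =
      EW * ((K : ℝ) / (K - 1) * (if i = j then 1 else 0) - 1 / (K - 1)))
    (hWsum : ∑ i : Fin K, w i = 0)
    (k : Fin K)
    (L : EuclideanSpace ℝ (Fin d) → ℝ)
    (hL : ∀ h, L h =
      -Real.log (Real.exp ⟪h, w k⟫ / ∑ j : Fin K, Real.exp ⟪h, w j⟫))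
    (hstar : EuclideanSpace ℝ (Fin d)) (hball : ‖hstar‖ ^ 2 ≤ EH)
    (hmin : ∀ h : EuclideanSpace ℝ (Fin d), ‖h‖ ^ 2 ≤ EH → L hstar ≤ L h) :
    ‖hstar‖ ^ 2 = EH :=
  ce_constraint_active_general d K hK EW EH hEW w hW k L hL hstar hball hmin
end
end

section
/- Let h* be a critical point of the Lagrangian of min L_CE(h, W*) s.t. ||h||² ≤ E_H with multiplier μ > 0 and W* a scaled simplex ETF. Then the inner products ⟨h*, w_j*⟩ are equal for all j ≠ k and the softmax probabilities satisfy p_j(h*) = p_{j'}(h*) for all j, j' ≠ k. -/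
open scoped BigOperators RealInnerProductSpace

noncomputable section

/-!
Up to the factor `1 / N`, the gradient of the cross-entropy at `h*` is `∑ j, p j • w j - w k`.
Since the Gram matrix of a simplex ETF is `a • I + b • 𝟙𝟙ᵀ` and the `p j` sum to `1`, pairing the
stationarity equation with `w j` (`j ≠ k`) leaves `(a / N) p_j + 2μ ⟪h*, w j⟫ = 0`, i.e.
`c exp x_j + 2μ x_j = 0` with `x_j = ⟪h*, w j⟫` and `c ≥ 0` independent of `j`. The left side is
strictly increasing in `x_j`, so all `x_j` with `j ≠ k` coincide, and hence so do the `p j`.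
-/

lemma sum_div_sum_eq_one {ι : Type*} [Fintype ι] (f : ι → ℝ) (hf : ∑ i, f i ≠ 0) :
    ∑ j, f j / ∑ i, f i = 1 := by
  rw [← Finset.sum_div, div_self hf]

lemma strictMono_mul_exp_add_mul {c d : ℝ} (hc : 0 ≤ c) (hd : 0 < d) :
    StrictMono fun x => c * Real.exp x + d * x :=
  (Real.exp_monotone.const_mul hc).add_strictMono (strictMono_mul_left_of_pos hd)

lemma inner_sum_smul_sub_of_gram {ι E : Type*} [Fintype ι] [DecidableEq ι]
    [NormedAddCommGroup E] [InnerProductSpace ℝ E] {w : ι → E} {a b : ℝ}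
    (hW : ∀ i j, ⟪w i, w j⟫ = a * (if i = j then 1 else 0) + b)
    {q : ι → ℝ} (hq : ∑ i, q i = 1) {j k : ι} (hjk : j ≠ k) :
    ⟪∑ i, q i • w i - w k, w j⟫ = a * q j := by
  simp only [inner_sub_left, sum_inner, real_inner_smul_left, hW, mul_add, mul_ite, mul_one,
    mul_zero, Finset.sum_add_distrib, Finset.sum_ite_eq', Finset.mem_univ, if_true,
    ← Finset.sum_mul, hq, if_neg hjk.symm]
  ring

lemma neg_smul_add_smul_sum_erase {ι E : Type*} [Fintype ι] [DecidableEq ι]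
    [AddCommGroup E] [Module ℝ E] (w : ι → E) (p : ι → ℝ) (k : ι) (N : ℝ) :
    -((1 - p k) / N) • w k + (1 / N) • (∑ j ∈ Finset.univ.erase k, p j • w j) =
      (1 / N) • (∑ j, p j • w j - w k) := by
  rw [← Finset.add_sum_erase _ _ (Finset.mem_univ k)]
  module

theorem ce_stationary_symmetry_general (d K : ℕ)
    (EW : ℝ) (hEW : 0 < EW) (N : ℝ) (hN : 0 < N)
    (w : Fin K → EuclideanSpace ℝ (Fin d))
    (hW : ∀ i j, ⟪w i, w j⟫ =
      EW * ((K : ℝ) / (K - 1) * (if i = j then 1 else 0) - 1 / (K - 1)))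
    (k : Fin K) (μ : ℝ) (hμ : 0 < μ)
    (hstar : EuclideanSpace ℝ (Fin d))
    (p : Fin K → ℝ)
    (hp : ∀ j, p j = Real.exp ⟪hstar, w j⟫ / ∑ j' : Fin K, Real.exp ⟪hstar, w j'⟫)
    (hstat : -((1 - p k) / N) • w k +
      (1 / N) • (∑ j ∈ Finset.univ.erase k, p j • w j) + (2 * μ) • hstar = 0) :
    (∀ j ∈ Finset.univ.erase k, ∀ j' ∈ Finset.univ.erase k,
      ⟪hstar, w j⟫ = ⟪hstar, w j'⟫) ∧
    (∀ j ∈ Finset.univ.erase k, ∀ j' ∈ Finset.univ.erase k, p j = p j') := by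
  set Z := ∑ j' : Fin K, Real.exp ⟪hstar, w j'⟫
  set a := EW * K / (K - 1)
  have hZ : 0 < Z := Finset.sum_pos (fun _ _ => Real.exp_pos _) ⟨k, Finset.mem_univ k⟩
  have ha : 0 ≤ a := by
    have : (1 : ℝ) ≤ K := by exact_mod_cast k.pos
    exact div_nonneg (by positivity) (by linarith)
  have hpsum : ∑ j, p j = 1 := by
    simp only [hp]
    exact sum_div_sum_eq_one _ hZ.ne'
  have hgram : ∀ i j, ⟪w i, w j⟫ = a * (if i = j then 1 else 0) + -(EW / (K - 1)) := by
    intro i j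
    rw [hW]
    ring
  have hkey : ∀ j ∈ Finset.univ.erase k,
      a / (N * Z) * Real.exp ⟪hstar, w j⟫ + 2 * μ * ⟪hstar, w j⟫ = 0 := by
    intro j hj
    have h := congrArg (⟪·, w j⟫) hstat
    simp only [neg_smul_add_smul_sum_erase, inner_add_left, real_inner_smul_left,
      inner_sum_smul_sub_of_gram hgram hpsum (Finset.ne_of_mem_erase hj), inner_zero_left,
      hp j] at h
    rw [← h]
    field_simp
  have hinner : ∀ j ∈ Finset.univ.erase k, ∀ j' ∈ Finset.univ.erase k,
      ⟪hstar, w j⟫ = ⟪hstar, w j'⟫ := fun j hj j' hj' =>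
    (strictMono_mul_exp_add_mul (by positivity) (by positivity)).injective
      ((hkey j hj).trans (hkey j' hj').symm)
  exact ⟨hinner, fun j hj j' hj' => by rw [hp j, hp j', hinner j hj j' hj']⟩

theorem ce_stationary_symmetry (d K : ℕ) (hK : 2 ≤ K)
    (EW : ℝ) (hEW : 0 < EW) (N : ℝ) (hN : 0 < N)
    (w : Fin K → EuclideanSpace ℝ (Fin d))
    (hW : ∀ i j, ⟪w i, w j⟫ =
      EW * ((K : ℝ) / (K - 1) * (if i = j then 1 else 0) - 1 / (K - 1)))
    (hWsum : ∑ i : Fin K, w i = 0)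
    (k : Fin K) (μ : ℝ) (hμ : 0 < μ)
    (hstar : EuclideanSpace ℝ (Fin d))
    (p : Fin K → ℝ)
    (hp : ∀ j, p j = Real.exp ⟪hstar, w j⟫ / ∑ j' : Fin K, Real.exp ⟪hstar, w j'⟫)
    (hstat : -((1 - p k) / N) • w k +
      (1 / N) • (∑ j ∈ Finset.univ.erase k, p j • w j) + (2 * μ) • hstar = 0) :
    (∀ j ∈ Finset.univ.erase k, ∀ j' ∈ Finset.univ.erase k,
      ⟪hstar, w j⟫ = ⟪hstar, w j'⟫) ∧
    (∀ j ∈ Finset.univ.erase k, ∀ j' ∈ Finset.univ.erase k, p j = p j') :=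
  ce_stationary_symmetry_general d K EW hEW N hN w hW k μ hμ hstar p hp hstat
end
end

section
/- Let ||h||² = E_H, ||w*||² = E_W, and h* = √(E_H/E_W) w*. One projected gradient step of the DR loss h⁺ = Proj_{E_H}(h - γ(cos∠(h,w*) - 1)w*) with step size γ = √(E_H/E_W) satisfies ||h⁺ - h*||² ≤ ((1 + cos∠(h,w*))/2)·||h - h*||², provided cos∠(h,w*) ≥ 0. -/
/-!
Write `h* = γ w*`, so that `‖h*‖ = ‖h‖` and `⟪h, h*⟫ = cos ‖h‖²`. The gradient step lands at
`h - cos • h* + h*`, whose squared distance to `h*` is `E_H (1 - cos²)`, while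
`‖h - h*‖² = 2 E_H (1 - cos)`; the ratio is `(1 + cos) / 2`. Projecting onto the ball, which
contains `h*`, does not increase the distance to `h*`.
-/

open scoped BigOperators RealInnerProductSpace

noncomputable section

/-- Orthogonal projection onto the ball `{x : ‖x‖² ≤ EH}`. -/
def projBall {d : ℕ} (EH : ℝ) (x : EuclideanSpace ℝ (Fin d)) :
    EuclideanSpace ℝ (Fin d) :=
  if ‖x‖ ^ 2 ≤ EH then x else (Real.sqrt EH / ‖x‖) • x

section InnerProductSpace

variable {E : Type*} [NormedAddCommGroup E] [InnerProductSpace ℝ E]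

lemma norm_smul_sub_le_norm_sub {t : ℝ} (ht0 : 0 ≤ t) (ht1 : t ≤ 1) {y z : E}
    (hz : ‖z‖ ≤ t * ‖y‖) : ‖t • y - z‖ ≤ ‖y - z‖ := by
  have hinner : ⟪y, z⟫ ≤ t * ‖y‖ ^ 2 := calc
    ⟪y, z⟫ ≤ ‖y‖ * ‖z‖ := real_inner_le_norm y z
    _ ≤ ‖y‖ * (t * ‖y‖) := by gcongr
    _ = t * ‖y‖ ^ 2 := by ring
  -- `‖y - z‖² - ‖t • y - z‖² = (1 - t) ((1 + t) ‖y‖² - 2 ⟪y, z⟫) ≥ (1 - t)² ‖y‖²`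
  have hsq : ‖t • y - z‖ ^ 2 ≤ ‖y - z‖ ^ 2 := by
    rw [norm_sub_sq_real, norm_sub_sq_real, norm_smul, real_inner_smul_left,
      Real.norm_of_nonneg ht0]
    nlinarith [mul_nonneg (sub_nonneg.2 ht1) (sub_nonneg.2 ht1), sq_nonneg ‖y‖,
      mul_le_mul_of_nonneg_left hinner (sub_nonneg.2 ht1)]
  exact (sq_le_sq₀ (norm_nonneg _) (norm_nonneg _)).1 hsq

lemma norm_sub_smul_sq_eq_of_norm_eq {h s : E} {cos : ℝ} (hs : ‖s‖ = ‖h‖)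
    (hcos : ⟪h, s⟫ = cos * ‖h‖ ^ 2) :
    ‖h - cos • s‖ ^ 2 = (1 + cos) / 2 * ‖h - s‖ ^ 2 := by
  rw [norm_sub_sq_real, norm_sub_sq_real, norm_smul, real_inner_smul_right, hcos, mul_pow,
    Real.norm_eq_abs, sq_abs, hs]
  ring

end InnerProductSpace

lemma norm_projBall_sub_le {d : ℕ} {EH : ℝ} (y : EuclideanSpace ℝ (Fin d))
    {z : EuclideanSpace ℝ (Fin d)} (hz : ‖z‖ ^ 2 ≤ EH) :
    ‖projBall EH y - z‖ ≤ ‖y - z‖ := by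
  unfold projBall
  split_ifs with hy
  · exact le_rfl
  have hEH : 0 ≤ EH := (sq_nonneg _).trans hz
  have hsqrt_lt : Real.sqrt EH < ‖y‖ := by
    simpa only [Real.sqrt_sq (norm_nonneg y)] using Real.sqrt_lt_sqrt hEH (not_le.1 hy)
  have hy0 : 0 < ‖y‖ := (Real.sqrt_nonneg _).trans_lt hsqrt_lt
  apply norm_smul_sub_le_norm_sub (by positivity) ((div_le_one hy0).2 hsqrt_lt.le)
  rw [div_mul_cancel₀ _ hy0.ne']
  exact Real.le_sqrt_of_sq_le hz

theorem dr_step_contraction_general (d : ℕ) (EW EH : ℝ) (hEW : 0 < EW) (hEH : 0 < EH)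
    (w : EuclideanSpace ℝ (Fin d)) (hw : ‖w‖ ^ 2 = EW)
    (h : EuclideanSpace ℝ (Fin d)) (hh : ‖h‖ ^ 2 = EH)
    (cos : ℝ) (hcos : cos = ⟪h, w⟫ / Real.sqrt (EH * EW))
    (hstar : EuclideanSpace ℝ (Fin d))
    (hhstar : hstar = Real.sqrt (EH / EW) • w)
    (γ : ℝ) (hγ : γ = Real.sqrt (EH / EW))
    (hplus : EuclideanSpace ℝ (Fin d))
    (hstep : hplus = projBall EH (h - γ • ((cos - 1) • w))) :
    ‖hplus - hstar‖ ^ 2 ≤ ((1 + cos) / 2) * ‖h - hstar‖ ^ 2 := by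
  subst hstep hhstar hγ
  set γ := Real.sqrt (EH / EW)
  have hγsq : γ ^ 2 = EH / EW := Real.sq_sqrt (by positivity)
  have hnorm_sq : ‖γ • w‖ ^ 2 = EH := by
    rw [norm_smul, mul_pow, Real.norm_eq_abs, sq_abs, hγsq, hw]
    field_simp
  have hnorm : ‖γ • w‖ = ‖h‖ := by
    rw [← sq_eq_sq₀ (norm_nonneg _) (norm_nonneg _), hnorm_sq, hh]
  have hinner : ⟪h, γ • w⟫ = cos * ‖h‖ ^ 2 := by
    have hsqrt : Real.sqrt (EH * EW) = γ * EW := by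
      rw [show EH * EW = EH / EW * EW ^ 2 by field_simp, Real.sqrt_mul (by positivity),
        Real.sqrt_sq hEW.le]
    have hEH_eq : EH = γ ^ 2 * EW := by rw [hγsq]; field_simp
    rw [hcos, hsqrt, real_inner_smul_right, hh, hEH_eq]
    field_simp
  calc ‖projBall EH (h - γ • ((cos - 1) • w)) - γ • w‖ ^ 2
      ≤ ‖h - γ • ((cos - 1) • w) - γ • w‖ ^ 2 := by
        gcongr
        exact norm_projBall_sub_le _ hnorm_sq.le
    _ = ‖h - cos • (γ • w)‖ ^ 2 := by congr 2; module
    _ = (1 + cos) / 2 * ‖h - γ • w‖ ^ 2 := norm_sub_smul_sq_eq_of_norm_eq hnorm hinner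

theorem dr_step_contraction (d : ℕ) (EW EH : ℝ) (hEW : 0 < EW) (hEH : 0 < EH)
    (w : EuclideanSpace ℝ (Fin d)) (hw : ‖w‖ ^ 2 = EW)
    (h : EuclideanSpace ℝ (Fin d)) (hh : ‖h‖ ^ 2 = EH)
    (cos : ℝ) (hcos : cos = ⟪h, w⟫ / Real.sqrt (EH * EW)) (hcos0 : 0 ≤ cos)
    (hstar : EuclideanSpace ℝ (Fin d))
    (hhstar : hstar = Real.sqrt (EH / EW) • w)
    (γ : ℝ) (hγ : γ = Real.sqrt (EH / EW))
    (hplus : EuclideanSpace ℝ (Fin d))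
    (hstep : hplus = projBall EH (h - γ • ((cos - 1) • w))) :
    ‖hplus - hstar‖ ^ 2 ≤ ((1 + cos) / 2) * ‖h - hstar‖ ^ 2 :=
  dr_step_contraction_general d EW EH hEW hEH w hw h hh cos hcos hstar hhstar γ hγ hplus hstep
end
end
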